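/- Let d ≥ 1, let P ⊆ {1,…,d}, and let x = (x_1,…,x_d) be uniform on {−1,1}^d. Independently of x, let c = (c_1,…,c_d) ∈ {0,1}^d have independent coordinates with q_i := Pr(c_i = 1[i∈P]) ∈ (0,1] for each i (the probability that coordinate i is selected 'correctly'). Let V be the event that ∏_{i : c_i = 1} x_i = ∏_{i ∈ P} x_i. Then for every s ∈ {1,…,d}: Pr(V | c_s = 1[s∈P]) = (1/2)·(1 + ∏_{i ≠ s} q_i) and Pr(V | c_s ≠ 1[s∈P]) = 1/2 (the latter requiring q_s < 1 so the conditioning event has positive probability). Consequently, the task-advantage ratio of the correct choice at step s equals 1 + ∏_{i≠s} q_i, and in the uniform case q_i = 1/2 for all i it equals 1 + 2^{−(d−1)} at every step s. -/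

import Mathlib

/-!
Let `D(c) = {i | c i ≠ 1[i ∈ P]}` be the set of wrongly chosen coordinates. Since every `x i`
squares to `1`, the verifier accepts iff `∏ i ∈ D(c), x i = 1`. When `D(c)` is nonempty,
negating one coordinate of `x` in `D(c)` is a bijection of the cube exchanging acceptance and
rejection, so given `c` the verifier accepts with probability `1/2`; it accepts surely only for
the all-correct pattern, which has probability `∏ i, q i`. Hence for an event `C` on `c` alone,
`Pr(V ∩ {c ∈ C}) = (Pr(c ∈ C) + 1[correct ∈ C] ∏ i, q i) / 2`, and by independence of the
coordinates of `c`, `Pr(c s = 1[s ∈ P]) = q s`.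
-/

noncomputable section

namespace Stmt2

open Finset

/-- Sample space: the input `x : Fin d → ℤˣ` (a point of the cube `{−1,1}^d`)
together with the selection pattern `c : Fin d → Bool`. -/
abbrev Omega (d : ℕ) := (Fin d → ℤˣ) × (Fin d → Bool)

/-- Density: `x` is uniform on the cube, and independently each coordinate `i` is
selected *correctly* (`c i = 1[i ∈ P]`) with probability `q i`. -/
def w {d : ℕ} (P : Finset (Fin d)) (q : Fin d → ℝ) (ω : Omega d) : ℝ :=
  ((1 : ℝ) / 2) ^ d * ∏ i, (if ω.2 i = decide (i ∈ P) then q i else 1 - q i)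

/-- Probability of an event. -/
def Pr {d : ℕ} (P : Finset (Fin d)) (q : Fin d → ℝ) (E : Set (Omega d)) : ℝ :=
  ∑ ω : Omega d, Set.indicator E (w P q) ω

/-- The verifier accepts: the parity of the selected bits equals the parity over `P`. -/
def Vev {d : ℕ} (P : Finset (Fin d)) : Set (Omega d) :=
  {ω | ∏ i ∈ univ.filter (fun i => ω.2 i = true), ω.1 i = ∏ i ∈ P, ω.1 i}

/-- The event that coordinate `s` is selected correctly, `c_s = 1[s ∈ P]`. -/
def Aev {d : ℕ} (P : Finset (Fin d)) (s : Fin d) : Set (Omega d) :=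
  {ω | ω.2 s = decide (s ∈ P)}

end Stmt2

open Finset

theorem Int.units_eq_iff_mul_eq_one {a b : ℤˣ} : a = b ↔ a * b = 1 := by
  rw [mul_eq_one_iff_eq_inv, Int.units_inv_eq_self]

theorem Fintype.sum_ite_prod_units_eq_one {ι : Type*} [Fintype ι] [DecidableEq ι]
    {E : Finset ι} (hE : E.Nonempty) :
    ∑ x : ι → ℤˣ, (if ∏ i ∈ E, x i = 1 then (1 : ℝ) else 0) = 2 ^ Fintype.card ι / 2 := by
  obtain ⟨j, hj⟩ := hE
  set N : ℤˣ → ℝ := fun u => ∑ x : ι → ℤˣ, if ∏ i ∈ E, x i = u then 1 else 0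
  have hflip : N 1 = N (-1) := by
    refine Fintype.sum_equiv (Equiv.mulRight (Pi.mulSingle j (-1))) _ _ fun x => ?_
    simp [prod_mul_distrib, hj, neg_eq_iff_eq_neg]
  have htotal : N 1 + N (-1) = 2 ^ Fintype.card ι := by
    have h : ∀ u : ℤˣ, (if u = 1 then (1 : ℝ) else 0) + (if u = -1 then 1 else 0) = 1 := by
      intro u
      rcases Int.units_eq_one_or u with rfl | rfl <;> simp
    simp only [N, ← sum_add_distrib, h]
    simp [Fintype.card_units_int]
  change N 1 = _
  linarith

theorem Fintype.sum_indicator_apply_eq_prod {ι β R : Type*} [Fintype ι] [DecidableEq ι]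
    [Fintype β] [CommSemiring R] (g : ι → β → R) (s : ι) (a : β) :
    ∑ c : ι → β, {c : ι → β | c s = a}.indicator (fun c => ∏ i, g i (c i)) c
      = g s a * ∏ i ∈ univ.erase s, ∑ b, g i b := by
  classical
  -- restricting to `c s = a` only changes the factor at `s`
  set g' : ι → β → R := fun i b => if i = s then (if b = a then g i b else 0) else g i b
  have hg'_erase : ∀ i ∈ univ.erase s, g' i = g i :=
    fun i hi => funext fun _ => if_neg (ne_of_mem_erase hi)
  have hg' : ∀ c : ι → β, {c : ι → β | c s = a}.indicator (fun c => ∏ i, g i (c i)) c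
      = ∏ i, g' i (c i) := by
    intro c
    rw [Set.indicator_apply, ← mul_prod_erase univ (fun i => g' i (c i)) (mem_univ s),
      Finset.prod_congr rfl fun i hi => congrFun (hg'_erase i hi) (c i),
      ← mul_prod_erase univ (fun i => g i (c i)) (mem_univ s)]
    by_cases hc : c s = a <;> simp [g', hc]
  rw [Finset.sum_congr rfl fun c _ => hg' c, ← Fintype.prod_sum, ← mul_prod_erase _ _ (mem_univ s),
    Finset.prod_congr rfl fun i hi => by rw [hg'_erase i hi]]
  simp [g']

namespace Stmt2

section

variable {d : ℕ} (P : Finset (Fin d)) (q : Fin d → ℝ)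

def selectProb (i : Fin d) (b : Bool) : ℝ := if b = decide (i ∈ P) then q i else 1 - q i

def patternWeight (c : Fin d → Bool) : ℝ := ∏ i, selectProb P q i (c i)

def correctPattern : Fin d → Bool := fun i => decide (i ∈ P)

def errorSet (c : Fin d → Bool) : Finset (Fin d) := univ.filter fun i => c i ≠ decide (i ∈ P)

theorem sum_selectProb (i : Fin d) : ∑ b, selectProb P q i b = 1 := by
  cases h : decide (i ∈ P) <;> simp [selectProb, h]

theorem errorSet_eq_empty_iff (c : Fin d → Bool) : errorSet P c = ∅ ↔ c = correctPattern P := by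
  simp [errorSet, filter_eq_empty_iff, funext_iff, correctPattern]

theorem mem_Vev_iff (x : Fin d → ℤˣ) (c : Fin d → Bool) :
    (x, c) ∈ Vev P ↔ ∏ i ∈ errorSet P c, x i = 1 := by
  set S := univ.filter fun i => c i = true
  have herr : errorSet P c = S \ P ∪ P \ S := by
    ext i
    cases hc : c i <;> by_cases hi : i ∈ P <;> simp [errorSet, S, hc, hi]
  rw [herr, prod_union disjoint_sdiff_sdiff, ← Int.units_eq_iff_mul_eq_one,
    prod_sdiff_eq_prod_sdiff_iff]
  rfl

theorem w_apply (x : Fin d → ℤˣ) (c : Fin d → Bool) :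
    w P q (x, c) = (1 / 2) ^ d * patternWeight P q c := rfl

theorem sum_w (c : Fin d → Bool) : ∑ x, w P q (x, c) = patternWeight P q c := by
  simp only [w_apply, sum_const, card_univ, Fintype.card_fun, Fintype.card_units_int,
    Fintype.card_fin, nsmul_eq_mul, ← mul_assoc]
  push_cast
  rw [← mul_pow]
  norm_num

theorem sum_indicator_Vev (c : Fin d → Bool) :
    ∑ x, (Vev P).indicator (w P q) (x, c)
      = (if c = correctPattern P then 1 else 1 / 2) * patternWeight P q c := by
  classical
  have hw : ∀ x, (Vev P).indicator (w P q) (x, c)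
      = (if ∏ i ∈ errorSet P c, x i = 1 then 1 else 0)
        * ((1 / 2) ^ d * patternWeight P q c) := by
    intro x
    rw [Set.indicator_apply, mem_Vev_iff]
    split_ifs <;> simp [w_apply]
  rw [sum_congr rfl fun x _ => hw x, ← sum_mul]
  by_cases hc : c = correctPattern P
  · simp [hc, (errorSet_eq_empty_iff P _).2 rfl, Fintype.card_units_int]
  · rw [if_neg hc, Fintype.sum_ite_prod_units_eq_one
      (nonempty_iff_ne_empty.2 ((errorSet_eq_empty_iff P c).not.2 hc))]
    simp [← mul_assoc, div_mul_eq_mul_div]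

theorem Pr_inter_preimage_snd (E : Set (Omega d)) (C : Set (Fin d → Bool)) :
    Pr P q (E ∩ Prod.snd ⁻¹' C)
      = ∑ c, C.indicator (fun c => ∑ x, E.indicator (w P q) (x, c)) c := by
  classical
  rw [Pr, Fintype.sum_prod_type, sum_comm]
  refine sum_congr rfl fun c _ => ?_
  by_cases hc : c ∈ C <;> simp [Set.indicator_apply, hc]

theorem Pr_preimage_snd (C : Set (Fin d → Bool)) :
    Pr P q (Prod.snd ⁻¹' C) = ∑ c, C.indicator (patternWeight P q) c := by
  rw [← Set.univ_inter (Prod.snd ⁻¹' C), Pr_inter_preimage_snd]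
  simp only [Set.indicator_univ, sum_w]

theorem Pr_Vev_inter_preimage_snd (C : Set (Fin d → Bool)) :
    Pr P q (Vev P ∩ Prod.snd ⁻¹' C)
      = (Pr P q (Prod.snd ⁻¹' C) + C.indicator (patternWeight P q) (correctPattern P)) / 2 := by
  classical
  rw [Pr_inter_preimage_snd, Pr_preimage_snd]
  simp only [sum_indicator_Vev]
  have h : ∀ c,
      C.indicator (fun c => (if c = correctPattern P then 1 else 1 / 2) * patternWeight P q c) c
        = C.indicator (patternWeight P q) c / 2
          + if c = correctPattern P then C.indicator (patternWeight P q) c / 2 else 0 := by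
    intro c
    by_cases hC : c ∈ C
    · simp only [Set.indicator_of_mem hC]
      split_ifs <;> ring
    · simp [Set.indicator_of_notMem hC]
  rw [sum_congr rfl fun c _ => h c, sum_add_distrib, ← sum_div, sum_ite_eq' univ,
    if_pos (mem_univ _)]
  ring

theorem Aev_eq_preimage (s : Fin d) : Aev P s = Prod.snd ⁻¹' {c | c s = decide (s ∈ P)} := rfl

theorem compl_Aev_eq_preimage (s : Fin d) :
    (Aev P s)ᶜ = Prod.snd ⁻¹' {c | c s = !decide (s ∈ P)} := by
  ext ω
  exact Bool.eq_not.symm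

theorem sum_indicator_patternWeight (s : Fin d) (a : Bool) :
    ∑ c, {c | c s = a}.indicator (patternWeight P q) c = selectProb P q s a := by
  unfold patternWeight
  rw [Fintype.sum_indicator_apply_eq_prod]
  simp only [sum_selectProb, prod_const_one, mul_one]

theorem Pr_Aev (s : Fin d) : Pr P q (Aev P s) = q s := by
  rw [Aev_eq_preimage, Pr_preimage_snd, sum_indicator_patternWeight]
  simp [selectProb]

theorem Pr_compl_Aev (s : Fin d) : Pr P q (Aev P s)ᶜ = 1 - q s := by
  rw [compl_Aev_eq_preimage, Pr_preimage_snd, sum_indicator_patternWeight]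
  simp [selectProb]

theorem Pr_Vev_inter_Aev (s : Fin d) : Pr P q (Vev P ∩ Aev P s) = (q s + ∏ i, q i) / 2 := by
  rw [Aev_eq_preimage, Pr_Vev_inter_preimage_snd, ← Aev_eq_preimage, Pr_Aev,
    Set.indicator_of_mem (by rfl)]
  simp [patternWeight, selectProb, correctPattern]

theorem Pr_Vev_inter_compl_Aev (s : Fin d) : Pr P q (Vev P ∩ (Aev P s)ᶜ) = (1 - q s) / 2 := by
  rw [compl_Aev_eq_preimage, Pr_Vev_inter_preimage_snd, ← compl_Aev_eq_preimage, Pr_compl_Aev,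
    Set.indicator_of_notMem (by simp [correctPattern]), add_zero]

end

theorem stmt2_general (d : ℕ) (P : Finset (Fin d)) (q : Fin d → ℝ)
    (hq : ∀ i, 0 < q i ∧ q i ≤ 1) :
    (∀ s : Fin d,
      Pr P q (Vev P ∩ Aev P s) / Pr P q (Aev P s)
        = (1 / 2) * (1 + ∏ i ∈ univ.erase s, q i))
    ∧ (∀ s : Fin d, q s < 1 →
      Pr P q (Vev P ∩ (Aev P s)ᶜ) / Pr P q ((Aev P s)ᶜ) = 1 / 2)
    ∧ (∀ s : Fin d, q s < 1 →
      (Pr P q (Vev P ∩ Aev P s) / Pr P q (Aev P s))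
          / (Pr P q (Vev P ∩ (Aev P s)ᶜ) / Pr P q ((Aev P s)ᶜ))
        = 1 + ∏ i ∈ univ.erase s, q i)
    ∧ ((∀ i, q i = 1 / 2) → ∀ s : Fin d,
      (Pr P q (Vev P ∩ Aev P s) / Pr P q (Aev P s))
          / (Pr P q (Vev P ∩ (Aev P s)ᶜ) / Pr P q ((Aev P s)ᶜ))
        = 1 + (1 / 2 : ℝ) ^ (d - 1)) := by
  have hcorrect : ∀ s, Pr P q (Vev P ∩ Aev P s) / Pr P q (Aev P s)
      = (1 / 2) * (1 + ∏ i ∈ univ.erase s, q i) := fun s => by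
    rw [Pr_Vev_inter_Aev, Pr_Aev, ← mul_prod_erase univ q (mem_univ s)]
    field_simp [(hq s).1.ne']
  have hwrong : ∀ s, q s < 1 → Pr P q (Vev P ∩ (Aev P s)ᶜ) / Pr P q (Aev P s)ᶜ = 1 / 2 :=
    fun s hs => by
      rw [Pr_Vev_inter_compl_Aev, Pr_compl_Aev]
      field_simp [(sub_pos.2 hs).ne']
  have hratio : ∀ s, q s < 1 → (Pr P q (Vev P ∩ Aev P s) / Pr P q (Aev P s))
      / (Pr P q (Vev P ∩ (Aev P s)ᶜ) / Pr P q (Aev P s)ᶜ) = 1 + ∏ i ∈ univ.erase s, q i :=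
    fun s hs => by rw [hcorrect, hwrong s hs]; ring
  refine ⟨hcorrect, hwrong, hratio, fun huniform s => ?_⟩
  rw [hratio s (by norm_num [huniform]), prod_congr rfl fun i _ => huniform i, prod_const,
    card_erase_of_mem (mem_univ s), card_univ, Fintype.card_fin]

/-- `Pr(V | c_s = 1[s∈P]) = (1/2)(1 + ∏_{i≠s} q_i)`,
`Pr(V | c_s ≠ 1[s∈P]) = 1/2` (when `q_s < 1`), hence the task-advantage ratio of the
correct choice at step `s` is `1 + ∏_{i≠s} q_i`, and in the uniform case `q_i = 1/2`
it equals `1 + 2^{−(d−1)}` at every step. -/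
theorem stmt2 (d : ℕ) (hd : 1 ≤ d) (P : Finset (Fin d)) (q : Fin d → ℝ)
    (hq : ∀ i, 0 < q i ∧ q i ≤ 1) :
    (∀ s : Fin d,
      Pr P q (Vev P ∩ Aev P s) / Pr P q (Aev P s)
        = (1 / 2) * (1 + ∏ i ∈ univ.erase s, q i))
    ∧ (∀ s : Fin d, q s < 1 →
      Pr P q (Vev P ∩ (Aev P s)ᶜ) / Pr P q ((Aev P s)ᶜ) = 1 / 2)
    ∧ (∀ s : Fin d, q s < 1 →
      (Pr P q (Vev P ∩ Aev P s) / Pr P q (Aev P s))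
          / (Pr P q (Vev P ∩ (Aev P s)ᶜ) / Pr P q ((Aev P s)ᶜ))
        = 1 + ∏ i ∈ univ.erase s, q i)
    ∧ ((∀ i, q i = 1 / 2) → ∀ s : Fin d,
      (Pr P q (Vev P ∩ Aev P s) / Pr P q (Aev P s))
          / (Pr P q (Vev P ∩ (Aev P s)ᶜ) / Pr P q ((Aev P s)ᶜ))
        = 1 + (1 / 2 : ℝ) ^ (d - 1)) :=
  stmt2_general d P q hq

end Stmt2
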